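/- arXiv:1512.02620 — 2 statements merged into one kernel-verified Lean document; each statement's English description precedes it below -/
import Mathlib

section
/- Let φ(t) = (at+b)/(ct+d) be a Möbius transformation (ad − bc ≠ 0), t₀ ∈ ℝ with ct₀ + d ≠ 0, and set s₀ = φ(t₀), s₀′ = φ′(t₀), s₀″ = φ″(t₀). Then there exists a nonzero real constant ρ such that ρ·a = 2(s₀′)² − s₀s₀″, ρ·b = 2s₀s₀′ + t₀s₀s₀″ − 2t₀(s₀′)², ρ·c = −s₀″, and ρ·d = 2s₀′ + t₀s₀″. -/
/-! With `Δ = ad - bc` and `u = ct₀ + d`, the jet of `φ` at `t₀` is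
`φ' = Δ / u²` and `φ'' = -2cΔ / u³`; substituting these, each of the four expressions equals
`ρ` times the corresponding coefficient for `ρ = 2Δ / u³`, which is nonzero. -/

section Moebius

variable {𝕜 : Type*} [NontriviallyNormedField 𝕜] (a b c d : 𝕜)

theorem hasDerivAt_moebius {t : 𝕜} (ht : c * t + d ≠ 0) :
    HasDerivAt (fun t => (a * t + b) / (c * t + d)) ((a * d - b * c) / (c * t + d) ^ 2) t := by
  have hnum : HasDerivAt (fun t => a * t + b) a t := by
    simpa using ((hasDerivAt_id t).const_mul a).add_const b
  have hden : HasDerivAt (fun t => c * t + d) c t := by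
    simpa using ((hasDerivAt_id t).const_mul c).add_const d
  refine (hnum.fun_div hden ht).congr_deriv ?_
  ring

theorem deriv_moebius_eventuallyEq {t₀ : 𝕜} (h : c * t₀ + d ≠ 0) :
    deriv (fun t => (a * t + b) / (c * t + d))
      =ᶠ[nhds t₀] fun t => (a * d - b * c) / (c * t + d) ^ 2 := by
  have hopen : IsOpen {t : 𝕜 | c * t + d ≠ 0} := isOpen_ne.preimage (by fun_prop)
  filter_upwards [hopen.mem_nhds h] with t ht using (hasDerivAt_moebius a b c d ht).deriv

theorem hasDerivAt_deriv_moebius {t : 𝕜} (ht : c * t + d ≠ 0) :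
    HasDerivAt (fun t => (a * d - b * c) / (c * t + d) ^ 2)
      (-(2 * c * (a * d - b * c)) / (c * t + d) ^ 3) t := by
  have hden : HasDerivAt (fun t => (c * t + d) ^ 2) (2 * (c * t + d) * c) t := by
    simpa [mul_comm] using (((hasDerivAt_id t).const_mul c).add_const d).fun_pow 2
  refine ((hasDerivAt_const t (a * d - b * c)).fun_div hden (pow_ne_zero 2 ht)).congr_deriv ?_
  field_simp
  ring

theorem deriv_deriv_moebius {t₀ : 𝕜} (h : c * t₀ + d ≠ 0) :
    deriv (deriv fun t => (a * t + b) / (c * t + d)) t₀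
      = -(2 * c * (a * d - b * c)) / (c * t₀ + d) ^ 3 := by
  rw [(deriv_moebius_eventuallyEq a b c d h).deriv_eq]
  exact (hasDerivAt_deriv_moebius a b c d h).deriv

end Moebius

theorem moebius_coefficients_from_jet (a b c d t₀ : ℝ) (hΔ : a * d - b * c ≠ 0)
    (h : c * t₀ + d ≠ 0) (φ : ℝ → ℝ)
    (hφ : ∀ t, φ t = (a * t + b) / (c * t + d)) :
    ∃ ρ : ℝ, ρ ≠ 0 ∧
      ρ * a = 2 * (deriv φ t₀) ^ 2 - φ t₀ * deriv (deriv φ) t₀ ∧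
      ρ * b = 2 * φ t₀ * deriv φ t₀ + t₀ * φ t₀ * deriv (deriv φ) t₀
        - 2 * t₀ * (deriv φ t₀) ^ 2 ∧
      ρ * c = -(deriv (deriv φ) t₀) ∧
      ρ * d = 2 * deriv φ t₀ + t₀ * deriv (deriv φ) t₀ := by
  obtain rfl : φ = fun t => (a * t + b) / (c * t + d) := funext hφ
  have hφ' := (hasDerivAt_moebius a b c d h).deriv
  have hφ'' := deriv_deriv_moebius a b c d h
  refine ⟨2 * (a * d - b * c) / (c * t₀ + d) ^ 3,
    div_ne_zero (mul_ne_zero two_ne_zero hΔ) (pow_ne_zero 3 h), ?_, ?_, ?_, ?_⟩ <;>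
    simp only [hφ', hφ''] <;> field_simp <;> ring
end

section
/- Let A₁, B₁, C₁, D₁ ∈ ℝ[t] and A₂, B₂, C₂, D₂ ∈ ℝ[s] be polynomials with A_i B_i and C_i D_i as in the setup, and suppose there is a nonzero constant μ with A₁(t)·D₁(t)² = μ²·C₁(t)²·B₁(t) and A₂(s)·D₂(s)² = μ²·C₂(s)²·B₂(s). Define K_λ(t,s) = A₁(t)B₂(s) − λ²A₂(s)B₁(t) and T_λ(t,s) = C₁(t)D₂(s) − λC₂(s)D₁(t). If B₁, B₂, D₁, D₂ are nonzero, then D₁(t)²·D₂(s)²·K_λ(t,s) = μ²·B₁(t)·B₂(s)·T_λ(t,s)·T_{−λ}(t,s) as polynomials in t, s, λ. -/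
open Polynomial

theorem helical_KT_factorization
    (A₁ B₁ C₁ D₁ A₂ B₂ C₂ D₂ : Polynomial ℝ) (μ : ℝ) (hμ : μ ≠ 0)
    (hB₁ : B₁ ≠ 0) (hB₂ : B₂ ≠ 0) (hD₁ : D₁ ≠ 0) (hD₂ : D₂ ≠ 0)
    (h₁ : A₁ * D₁ ^ 2 = Polynomial.C (μ ^ 2) * (C₁ ^ 2 * B₁))
    (h₂ : A₂ * D₂ ^ 2 = Polynomial.C (μ ^ 2) * (C₂ ^ 2 * B₂)) :
    ∀ t s lam : ℝ,
      D₁.eval t ^ 2 * D₂.eval s ^ 2 *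
        (A₁.eval t * B₂.eval s - lam ^ 2 * A₂.eval s * B₁.eval t) =
      μ ^ 2 * B₁.eval t * B₂.eval s *
        (C₁.eval t * D₂.eval s - lam * C₂.eval s * D₁.eval t) *
        (C₁.eval t * D₂.eval s - (-lam) * C₂.eval s * D₁.eval t) := by
  intro t s lam
  have e₁ := congrArg (Polynomial.eval t) h₁
  have e₂ := congrArg (Polynomial.eval s) h₂
  simp only [eval_mul, eval_pow, eval_C] at e₁ e₂
  linear_combination (D₂.eval s ^ 2 * B₂.eval s) * e₁ -
    (lam ^ 2 * D₁.eval t ^ 2 * B₁.eval t) * e₂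
end
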